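/- If the ground state Ψ of H_0 + V has density ρ with ρ_j = 0 at some vertex j, then for every t ≥ 0 the state Ψ remains a ground state of H_0 + V + t·V_j, where V_j is the potential operator for the potential that is 1 at vertex j and 0 elsewhere. In particular ρ is not uniquely v-representable. -/

import Mathlib

open scoped BigOperators

abbrev FIdx (M N : ℕ) := {I : Finset (Fin M) // I.card = N}

/-- Density of a fermionic state. -/
def density (M N : ℕ) (Ψ : FIdx M N → ℂ) (i : Fin M) : ℝ :=
  ∑ I : FIdx M N, if i ∈ I.1 then Complex.normSq (Ψ I) else 0

/-- The diagonal potential operator on `Λ^N ℂ^M` induced by `v ∈ ℝ^M`: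
`V e_I = (Σ_{i∈I} v_i) e_I`. -/
def Vmat (M N : ℕ) (v : Fin M → ℝ) : Matrix (FIdx M N) (FIdx M N) ℂ :=
  Matrix.diagonal fun I => ((∑ i ∈ I.1, v i : ℝ) : ℂ)

/-- The (real) quadratic form `⟨Ψ, HΨ⟩`. -/
noncomputable def quadForm (M N : ℕ) (H : Matrix (FIdx M N) (FIdx M N) ℂ) (Ψ : FIdx M N → ℂ) : ℝ :=
  (dotProduct (star Ψ) (H.mulVec Ψ)).re

/-- A ground state: a normalized minimizer of the quadratic form over the unit sphere. -/
def IsGroundState (M N : ℕ) (H : Matrix (FIdx M N) (FIdx M N) ℂ) (Ψ : FIdx M N → ℂ) : Prop :=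
  (∑ I : FIdx M N, Complex.normSq (Ψ I) = 1) ∧
  ∀ Φ : FIdx M N → ℂ, (∑ I : FIdx M N, Complex.normSq (Φ I) = 1) →
    quadForm M N H Ψ ≤ quadForm M N H Φ

/-! Adding the potential `t • 1_j` changes the energy of any state `Φ` by `t ρ_Φ(j) ≥ 0`, and
changes the energy of `Ψ` by nothing since `ρ_Ψ(j) = 0`; so `Ψ` stays a minimizer. As there are
at least two vertices, `v + 1_j` is not a constant shift of `v`. -/

section

variable {M N : ℕ}

lemma density_nonneg (Ψ : FIdx M N → ℂ) (i : Fin M) : 0 ≤ density M N Ψ i :=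
  Finset.sum_nonneg fun I _ => by split_ifs <;> simp [Complex.normSq_nonneg]

lemma quadForm_add (H K : Matrix (FIdx M N) (FIdx M N) ℂ) (Ψ : FIdx M N → ℂ) :
    quadForm M N (H + K) Ψ = quadForm M N H Ψ + quadForm M N K Ψ := by
  rw [quadForm, Matrix.add_mulVec, dotProduct_add, Complex.add_re, quadForm, quadForm]

lemma Vmat_add (v w : Fin M → ℝ) : Vmat M N (v + w) = Vmat M N v + Vmat M N w := by
  simp only [Vmat, Pi.add_apply, Finset.sum_add_distrib, Complex.ofReal_add,
    Matrix.diagonal_add]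

lemma quadForm_Vmat (w : Fin M → ℝ) (Ψ : FIdx M N → ℂ) :
    quadForm M N (Vmat M N w) Ψ = ∑ i, w i * density M N Ψ i := by
  have hdiag : ∀ I : FIdx M N, (star (Ψ I) * ((∑ i ∈ I.1, w i : ℝ) * Ψ I)).re
      = ∑ i, if i ∈ I.1 then w i * Complex.normSq (Ψ I) else 0 := by
    intro I
    rw [Finset.sum_ite_mem, Finset.univ_inter, ← Finset.sum_mul, mul_left_comm,
      RCLike.star_def, ← Complex.normSq_eq_conj_mul_self, ← Complex.ofReal_mul,
      Complex.ofReal_re]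
  simp only [quadForm, Vmat, Matrix.mulVec_diagonal, dotProduct, Pi.star_apply, Complex.re_sum,
    hdiag, density, Finset.mul_sum, mul_ite, mul_zero]
  exact Finset.sum_comm

lemma quadForm_Vmat_vertex (t : ℝ) (j : Fin M) (Ψ : FIdx M N → ℂ) :
    quadForm M N (Vmat M N fun i => t * if i = j then 1 else 0) Ψ = t * density M N Ψ j := by
  simp [quadForm_Vmat]

lemma IsGroundState.add_of_nonneg {H W : Matrix (FIdx M N) (FIdx M N) ℂ} {Ψ : FIdx M N → ℂ}
    (hΨ : IsGroundState M N H Ψ) (hW : ∀ Φ, 0 ≤ quadForm M N W Φ) (hWΨ : quadForm M N W Ψ = 0) :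
    IsGroundState M N (H + W) Ψ := by
  refine ⟨hΨ.1, fun Φ hΦ => ?_⟩
  rw [quadForm_add, quadForm_add, hWΨ, add_zero]
  exact le_add_of_le_of_nonneg (hΨ.2 Φ hΦ) (hW Φ)

lemma IsGroundState.add_vertex_potential {H0 : Matrix (FIdx M N) (FIdx M N) ℂ} {v : Fin M → ℝ}
    {Ψ : FIdx M N → ℂ} {j : Fin M} (hg : IsGroundState M N (H0 + Vmat M N v) Ψ)
    (hρ : density M N Ψ j = 0) {t : ℝ} (ht : 0 ≤ t) :
    IsGroundState M N (H0 + Vmat M N (fun i => v i + t * (if i = j then 1 else 0))) Ψ := by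
  change IsGroundState M N (H0 + Vmat M N (v + fun i => t * if i = j then 1 else 0)) Ψ
  rw [Vmat_add, ← add_assoc]
  refine hg.add_of_nonneg (fun Φ => ?_) ?_ <;> rw [quadForm_Vmat_vertex]
  · exact mul_nonneg ht (density_nonneg Φ j)
  · rw [hρ, mul_zero]

end

lemma not_exists_const_add_indicator {ι : Type*} [DecidableEq ι] [Nontrivial ι]
    (v : ι → ℝ) (j : ι) : ¬ ∃ c : ℝ, ∀ i, v i + 1 * (if i = j then 1 else 0) = v i + c := by
  rintro ⟨c, hc⟩
  obtain ⟨i, hij⟩ := exists_ne j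
  have hj := hc j
  have hi := hc i
  simp only [if_true, if_neg hij] at hi hj
  linarith

theorem zero_density_not_uv_general (M N : ℕ) (hN : 0 < N) (hNM : N < M)
    (H0 : Matrix (FIdx M N) (FIdx M N) ℂ)
    (v : Fin M → ℝ) (Ψ : FIdx M N → ℂ) (j : Fin M)
    (hg : IsGroundState M N (H0 + Vmat M N v) Ψ)
    (hρ : density M N Ψ j = 0) :
    (∀ t : ℝ, 0 ≤ t →
      IsGroundState M N (H0 + Vmat M N (fun i => v i + t * (if i = j then 1 else 0))) Ψ) ∧
    ∃ v' : Fin M → ℝ,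
      (∃ Ψ' : FIdx M N → ℂ, IsGroundState M N (H0 + Vmat M N v') Ψ' ∧
        density M N Ψ' = density M N Ψ) ∧
      ¬ ∃ c : ℝ, ∀ i, v' i = v i + c := by
  have : Nontrivial (Fin M) := Fin.nontrivial_iff_two_le.mpr (by omega)
  exact ⟨fun t ht => hg.add_vertex_potential hρ ht,
    _, ⟨Ψ, hg.add_vertex_potential hρ zero_le_one, rfl⟩, not_exists_const_add_indicator v j⟩

/-- If the ground state `Ψ` of `H₀ + V` has density vanishing at vertex `j`, then for every
`t ≥ 0` the state `Ψ` remains a ground state of `H₀ + V + t·V_j` where `V_j` is the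
potential concentrated at vertex `j`; in particular the density of `Ψ` is not uniquely
`v`-representable. -/
theorem zero_density_not_uv (M N : ℕ) (hN : 0 < N) (hNM : N < M)
    (H0 : Matrix (FIdx M N) (FIdx M N) ℂ) (hH0 : H0.IsHermitian)
    (v : Fin M → ℝ) (Ψ : FIdx M N → ℂ) (j : Fin M)
    (hg : IsGroundState M N (H0 + Vmat M N v) Ψ)
    (hρ : density M N Ψ j = 0) :
    (∀ t : ℝ, 0 ≤ t →
      IsGroundState M N (H0 + Vmat M N (fun i => v i + t * (if i = j then 1 else 0))) Ψ) ∧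
    ∃ v' : Fin M → ℝ,
      (∃ Ψ' : FIdx M N → ℂ, IsGroundState M N (H0 + Vmat M N v') Ψ' ∧
        density M N Ψ' = density M N Ψ) ∧
      ¬ ∃ c : ℝ, ∀ i, v' i = v i + c :=
  zero_density_not_uv_general M N hN hNM H0 v Ψ j hg hρ
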